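/- arXiv:2207.12514 — 7 statements merged into one kernel-verified Lean document; each statement's English description precedes it below -/
import Mathlib

section
/- Let α, β ∈ (0,1) with α > β, and let D be a distribution over {0,1}^n that is β-close in Earth Mover Distance to some (α,r)-clusterable distribution. Then D is (β/α, 3α, r)-clusterable: there is a partition C₀, C₁, …, C_s of {0,1}^n with s ≤ r, D(C₀) ≤ β/α, and for every 1 ≤ i ≤ s and all U, V ∈ C_i, d_H(U,V) ≤ 3α. -/
/-- The normalized Hamming distance on the Boolean cube `{0,1}^n`. -/
noncomputable def nHam {n : ℕ} (x y : Fin n → Bool) : ℝ :=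
  (hammingDist x y : ℝ) / n

/-- `D` is a probability distribution on a finite set: nonnegative with total mass 1. -/
def IsDist {Ω : Type*} [Fintype Ω] (D : Ω → ℝ) : Prop :=
  (∀ x, 0 ≤ D x) ∧ ∑ x, D x = 1

/-- `f` is a valid transportation flow from `D₁` to `D₂`. -/
def IsFlow {n : ℕ} (D₁ D₂ : (Fin n → Bool) → ℝ)
    (f : (Fin n → Bool) → (Fin n → Bool) → ℝ) : Prop :=
  (∀ x y, 0 ≤ f x y) ∧ (∀ x, ∑ y, f x y = D₁ x) ∧ (∀ y, ∑ x, f x y = D₂ y)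

/-- The Earth Mover Distance between two distributions on `{0,1}^n`, with respect to
the normalized Hamming distance: the infimum of the costs of valid flows. -/
noncomputable def emd {n : ℕ} (D₁ D₂ : (Fin n → Bool) → ℝ) : ℝ :=
  sInf { c | ∃ f, IsFlow D₁ D₂ f ∧ ∑ x, ∑ y, f x y * nHam x y = c }

/-- A distribution `D` over `{0,1}^n` is `(ζ,δ,r)`-clusterable: `{0,1}^n` can be
partitioned into `C₀, C₁, …, C_s` with `s ≤ r`, `D(C₀) ≤ ζ`, and each `C i` (`i ≥ 1`)
of normalized Hamming diameter at most `δ`. -/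
def Clusterable {n : ℕ} (ζ δ : ℝ) (r : ℕ) (D : (Fin n → Bool) → ℝ) : Prop :=
  ∃ (s : ℕ) (C : Fin (s + 1) → Finset (Fin n → Bool)),
    s ≤ r ∧
    (∀ i j, i ≠ j → Disjoint (C i) (C j)) ∧
    (∀ x, ∃ i, x ∈ C i) ∧
    (∑ x ∈ C 0, D x ≤ ζ) ∧
    (∀ i : Fin (s + 1), i ≠ 0 → ∀ x ∈ C i, ∀ y ∈ C i, nHam x y ≤ δ)

/-!
Let `D₀` be the `(α,r)`-clusterable distribution with `emd D D₀ ≤ β`, clustered by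
`C₀, C₁, …, C_s` with `D₀(C₀) = 0`. Put each point of the cube into some cluster `C_i`
(`i ≠ 0`) that it is `α`-close to, and into the new `C₀` if there is none. Two points of a new
cluster `i ≠ 0` are `α`-close to points of `C_i`, which are `α`-close to each other, so the
diameter is at most `3α`. Every point of the new `C₀` is more than `α` away from the support
of `D₀`, so any flow from `D` to `D₀` pays at least `α · D(C₀)`, whence `D(C₀) ≤ β / α`.
-/

open Finset

section NormalizedHamming

variable {n : ℕ}

lemma nHam_nonneg (x y : Fin n → Bool) : 0 ≤ nHam x y := by
  unfold nHam
  positivity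

lemma nHam_comm (x y : Fin n → Bool) : nHam x y = nHam y x := by
  rw [nHam, nHam, hammingDist_comm]

lemma nHam_triangle (x y z : Fin n → Bool) : nHam x z ≤ nHam x y + nHam y z := by
  rw [nHam, nHam, nHam, ← add_div]
  gcongr
  exact_mod_cast hammingDist_triangle x y z

end NormalizedHamming

section EarthMover

variable {n : ℕ} {D₁ D₂ : (Fin n → Bool) → ℝ}

lemma IsDist.eq_zero_of_sum_nonpos {Ω : Type*} [Fintype Ω] {D : Ω → ℝ} (hD : IsDist D)
    {A : Finset Ω} (hA : ∑ x ∈ A, D x ≤ 0) {x : Ω} (hx : x ∈ A) : D x = 0 :=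
  (sum_eq_zero_iff_of_nonneg fun y _ => hD.1 y).1
    (hA.antisymm (sum_nonneg fun y _ => hD.1 y)) x hx

lemma IsFlow.eq_zero_of_eq_zero {f : (Fin n → Bool) → (Fin n → Bool) → ℝ}
    (hf : IsFlow D₁ D₂ f) {y : Fin n → Bool} (hy : D₂ y = 0) (x : Fin n → Bool) :
    f x y = 0 :=
  (sum_eq_zero_iff_of_nonneg fun x _ => hf.1 x y).1 (hy ▸ hf.2.2 y) x (mem_univ x)

lemma isFlow_mul (h₁ : IsDist D₁) (h₂ : IsDist D₂) :
    IsFlow D₁ D₂ fun x y => D₁ x * D₂ y := by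
  refine ⟨fun x y => mul_nonneg (h₁.1 x) (h₂.1 y), fun x => ?_, fun y => ?_⟩
  · rw [← mul_sum, h₂.2, mul_one]
  · rw [← sum_mul, h₁.2, one_mul]

lemma le_emd_of_forall_isFlow (h₁ : IsDist D₁) (h₂ : IsDist D₂) {c : ℝ}
    (hc : ∀ f, IsFlow D₁ D₂ f → c ≤ ∑ x, ∑ y, f x y * nHam x y) : c ≤ emd D₁ D₂ :=
  le_csInf ⟨_, _, isFlow_mul h₁ h₂, rfl⟩ fun _ ⟨f, hf, hcost⟩ => hcost ▸ hc f hf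

lemma mul_sum_le_emd (h₁ : IsDist D₁) (h₂ : IsDist D₂) {α : ℝ} {A : Finset (Fin n → Bool)}
    (hA : ∀ x ∈ A, ∀ y, D₂ y ≠ 0 → α ≤ nHam x y) : α * ∑ x ∈ A, D₁ x ≤ emd D₁ D₂ := by
  refine le_emd_of_forall_isFlow h₁ h₂ fun f hf => ?_
  have hrow : ∀ x ∈ A, α * D₁ x ≤ ∑ y, f x y * nHam x y := by
    intro x hx
    rw [← hf.2.1 x, mul_sum]
    refine sum_le_sum fun y _ => ?_
    by_cases hy : D₂ y = 0
    · simp [hf.eq_zero_of_eq_zero hy x]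
    · rw [mul_comm]
      exact mul_le_mul_of_nonneg_left (hA x hx y hy) (hf.1 x y)
  calc α * ∑ x ∈ A, D₁ x ≤ ∑ x ∈ A, ∑ y, f x y * nHam x y := by
        rw [mul_sum]
        exact sum_le_sum hrow
    _ ≤ ∑ x, ∑ y, f x y * nHam x y :=
        sum_le_sum_of_subset_of_nonneg (subset_univ A) fun x _ _ =>
          sum_nonneg fun y _ => mul_nonneg (hf.1 x y) (nHam_nonneg x y)

end EarthMover

lemma clusterable_of_fibers {n s r : ℕ} {ζ δ : ℝ} {D : (Fin n → Bool) → ℝ}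
    (g : (Fin n → Bool) → Fin (s + 1)) (hsr : s ≤ r)
    (hζ : ∑ x with g x = 0, D x ≤ ζ)
    (hδ : ∀ x y, g x = g y → g x ≠ 0 → nHam x y ≤ δ) : Clusterable ζ δ r D := by
  refine ⟨s, fun i => {x | g x = i}, hsr, fun i j hij => ?_, fun x => ⟨g x, by simp⟩, hζ,
    fun i hi x hx y hy => ?_⟩
  · exact disjoint_filter.2 fun x _ hi hj => hij (hi ▸ hj)
  · rw [mem_filter] at hx hy
    exact hδ x y (hx.2.trans hy.2.symm) (hx.2 ▸ hi)

lemma exists_select_ne_zero {X ι : Type*} [Zero ι] (P : X → ι → Prop) :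
    ∃ g : X → ι, ∀ x, (g x ≠ 0 → P x (g x)) ∧ (g x = 0 → ∀ i ≠ 0, ¬ P x i) := by
  classical
  refine ⟨fun x => if h : ∃ i ≠ 0, P x i then h.choose else 0, fun x => ?_⟩
  by_cases h : ∃ i ≠ 0, P x i
  · simp only [dif_pos h]
    exact ⟨fun _ => h.choose_spec.2, fun h0 => absurd h0 h.choose_spec.1⟩
  · simp only [dif_neg h]
    exact ⟨fun h0 => absurd rfl h0, fun _ i hi hP => h ⟨i, hi, hP⟩⟩

theorem stmt_5_general {n : ℕ} (α β : ℝ) (r : ℕ)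
    (hα : 0 < α)
    (D : (Fin n → Bool) → ℝ) (hD : IsDist D)
    (hclose : ∃ D₀, IsDist D₀ ∧ Clusterable 0 α r D₀ ∧ emd D D₀ ≤ β) :
    Clusterable (β / α) (3 * α) r D := by
  obtain ⟨D₀, hD₀, ⟨s, C, hsr, -, hcov, hC₀, hdiam⟩, hemd⟩ := hclose
  obtain ⟨g, hg⟩ := exists_select_ne_zero fun (x : Fin n → Bool) (i : Fin (s + 1)) =>
    ∃ y ∈ C i, nHam x y ≤ α
  refine clusterable_of_fibers g hsr ?_ fun x y hxy hx => ?_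
  · have hfar : ∀ x ∈ ({x | g x = 0} : Finset _), ∀ y, D₀ y ≠ 0 → α ≤ nHam x y := by
      intro x hx y hy
      obtain ⟨i, hyi⟩ := hcov y
      have hi : i ≠ 0 := by
        rintro rfl
        exact hy (hD₀.eq_zero_of_sum_nonpos hC₀ hyi)
      by_contra! hlt
      exact (hg x).2 (mem_filter.1 hx).2 i hi ⟨y, hyi, hlt.le⟩
    rw [le_div_iff₀ hα, mul_comm]
    exact (mul_sum_le_emd hD hD₀ hfar).trans hemd
  · obtain ⟨u, hu, hxu⟩ := (hg x).1 hx
    obtain ⟨v, hv, hyv⟩ := (hg y).1 (hxy ▸ hx)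
    have huv := hdiam (g x) hx u hu v (hxy ▸ hv)
    calc nHam x y ≤ nHam x u + nHam u v + nHam v y :=
          by linarith [nHam_triangle x v y, nHam_triangle x u v]
      _ ≤ 3 * α := by linarith [nHam_comm v y]

/-- Let `α, β ∈ (0,1)` with `α > β`, and let `D` be β-close in Earth Mover
Distance to some `(α,r)`-clusterable distribution (i.e. `(0,α,r)`-clusterable).
Then `D` is `(β/α, 3α, r)`-clusterable. -/
theorem stmt_5 {n : ℕ} (α β : ℝ) (r : ℕ)
    (hα : 0 < α) (hα1 : α < 1) (hβ : 0 < β) (hβ1 : β < 1) (hβα : β < α)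
    (D : (Fin n → Bool) → ℝ) (hD : IsDist D)
    (hclose : ∃ D₀, IsDist D₀ ∧ Clusterable 0 α r D₀ ∧ emd D D₀ ≤ β) :
    Clusterable (β / α) (3 * α) r D :=
  stmt_5_general α β r hα D hD hclose
end

section
/- Let D₁ and D₂ be distributions over {0,1}^n admitting corresponding matrices L and M respectively, both of dimension s × n (each distribution is obtained by choosing a uniformly random row of its matrix). Then the Earth Mover Distance between D₁ and D₂ equals the minimum over all permutations π of [s] of the normalized Hamming distance between L^π and M, where d_H(L,M) = |{(i,j) : L_{ij} ≠ M_{ij}}|/(s·n) and L^π is L with rows permuted by π. -/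
/-- The distribution on `{0,1}^n` obtained by choosing a uniformly random row of the
`s × n` matrix `L`. -/
noncomputable def rowDist {s n : ℕ} (L : Fin s → Fin n → Bool) : (Fin n → Bool) → ℝ :=
  fun x => ((Finset.univ.filter (fun i => L i = x)).card : ℝ) / s

/-- The normalized Hamming distance between two `s × n` Boolean matrices:
the fraction of mismatching entries. -/
noncomputable def matDist {s n : ℕ} (L M : Fin s → Fin n → Bool) : ℝ :=
  (∑ i, (hammingDist (L i) (M i) : ℝ)) / (s * n)

/-! A flow between the two empirical row distributions, scaled by `s`, has the row counts as
marginals. Spreading the mass it moves from `x` to `y` uniformly over the pairs of rows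
`(i, j)` with `L i = x`, `M j = y` gives a doubly stochastic `s × s` matrix with the same cost,
and by Birkhoff's theorem some permutation matrix costs no more. Conversely, the rows of `L^π`
matched with those of `M` form a flow whose cost is `d_H(L^π, M)`. -/

open Finset Matrix

lemma exists_perm_sum_le_of_mem_doublyStochastic {ι : Type*} [Fintype ι] [DecidableEq ι]
    {A : Matrix ι ι ℝ} (hA : A ∈ doublyStochastic ℝ ι) (C : Matrix ι ι ℝ) :
    ∃ σ : Equiv.Perm ι, ∑ i, C i (σ i) ≤ ∑ i, ∑ j, A i j * C i j := by
  let cost : Matrix ι ι ℝ →ₗ[ℝ] ℝ :=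
    { toFun := fun B => ∑ i, ∑ j, B i j * C i j
      map_add' := fun B B' => by simp only [Matrix.add_apply, add_mul, sum_add_distrib]
      map_smul' := fun r B => by
        simp only [Matrix.smul_apply, smul_eq_mul, mul_sum, mul_assoc, RingHom.id_apply] }
  rw [← SetLike.mem_coe, doublyStochastic_eq_convexHull_permMatrix] at hA
  obtain ⟨_, ⟨σ, rfl⟩, hσ⟩ :=
    (cost.concaveOn convex_univ).exists_le_of_mem_convexHull (Set.subset_univ _) hA
  refine ⟨σ, le_of_eq_of_le ?_ hσ⟩
  simp [cost, Equiv.toPEquiv_apply, PEquiv.toMatrix_apply]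

section EmpiricalTransport

variable {ι X : Type*} [Fintype ι] [DecidableEq X]

def rowCount (L : ι → X) (x : X) : ℕ := #{i | L i = x}

def pairCount (L M : ι → X) (x y : X) : ℕ := #{i | L i = x ∧ M i = y}

lemma rowCount_apply_self_ne_zero (L : ι → X) (i : ι) : rowCount L (L i) ≠ 0 :=
  (card_pos.2 ⟨i, by simp⟩).ne'

lemma rowCount_comp_perm (L : ι → X) (σ : Equiv.Perm ι) :
    rowCount (fun i => L (σ i)) = rowCount L :=
  funext fun x => card_equiv σ (by simp)

noncomputable def planMatrix (L M : ι → X) (g : X → X → ℝ) : Matrix ι ι ℝ :=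
  fun i j => g (L i) (M j) / (rowCount L (L i) * rowCount M (M j))

lemma planMatrix_transpose (L M : ι → X) (g : X → X → ℝ) :
    (planMatrix L M g)ᵀ = planMatrix M L (fun y x => g x y) := by
  ext i j
  simp only [transpose_apply, planMatrix, mul_comm]

variable [Fintype X]

lemma sum_comp_eq_sum_rowCount_mul (L : ι → X) (φ : X → ℝ) :
    ∑ i, φ (L i) = ∑ x, rowCount L x * φ x := by
  simp only [rowCount, ← sum_fiberwise' univ L φ, sum_const, nsmul_eq_mul]

def IsTransportPlan (L M : ι → X) (g : X → X → ℝ) : Prop :=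
  (∀ x y, 0 ≤ g x y) ∧ (∀ x, ∑ y, g x y = rowCount L x) ∧ ∀ y, ∑ x, g x y = rowCount M y

lemma isTransportPlan_pairCount (L M : ι → X) :
    IsTransportPlan L M (fun x y => pairCount L M x y) := by
  refine ⟨fun x y => Nat.cast_nonneg _, fun x => ?_, fun y => ?_⟩
  · rw [rowCount, card_eq_sum_card_fiberwise (f := M) (t := univ) fun i _ => mem_univ _]
    simp only [pairCount, filter_filter, Nat.cast_sum]
  · rw [rowCount, card_eq_sum_card_fiberwise (f := L) (t := univ) fun i _ => mem_univ _]
    simp only [pairCount, filter_filter, Nat.cast_sum, and_comm]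

lemma sum_pairCount_mul (L M : ι → X) (c : X → X → ℝ) :
    ∑ x, ∑ y, pairCount L M x y * c x y = ∑ i, c (L i) (M i) := by
  rw [sum_comp_eq_sum_rowCount_mul (fun i => (L i, M i)) fun p => c p.1 p.2,
    Fintype.sum_prod_type]
  simp only [rowCount, pairCount, Prod.mk.injEq]

namespace IsTransportPlan

variable {L M : ι → X} {g : X → X → ℝ}

lemma swap (h : IsTransportPlan L M g) : IsTransportPlan M L (fun y x => g x y) :=
  ⟨fun y x => h.1 x y, h.2.2, h.2.1⟩

lemma eq_zero_of_rowCount_right_eq_zero (h : IsTransportPlan L M g) {x y : X}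
    (hy : rowCount M y = 0) : g x y = 0 := by
  have hsum : ∑ x, g x y = 0 := by rw [h.2.2, hy, Nat.cast_zero]
  exact (sum_eq_zero_iff_of_nonneg fun x _ => h.1 x y).1 hsum x (mem_univ x)

lemma eq_zero_of_rowCount_left_eq_zero (h : IsTransportPlan L M g) {x y : X}
    (hx : rowCount L x = 0) : g x y = 0 :=
  h.swap.eq_zero_of_rowCount_right_eq_zero hx

lemma sum_planMatrix_mul (h : IsTransportPlan L M g) (i : ι) (φ : X → ℝ) :
    ∑ j, planMatrix L M g i j * φ (M j) = (∑ y, g (L i) y * φ y) / rowCount L (L i) := by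
  refine (sum_comp_eq_sum_rowCount_mul M
    fun y => g (L i) y / (rowCount L (L i) * rowCount M y) * φ y).trans ?_
  rw [sum_div]
  refine sum_congr rfl fun y _ => ?_
  rcases eq_or_ne (rowCount M y : ℝ) 0 with hy | hy
  · rw [h.eq_zero_of_rowCount_right_eq_zero (by exact_mod_cast hy), hy]
    simp
  · field_simp

lemma sum_planMatrix_row (h : IsTransportPlan L M g) (i : ι) :
    ∑ j, planMatrix L M g i j = 1 := by
  have hrow := h.sum_planMatrix_mul i 1
  simp only [Pi.one_apply, mul_one, h.2.1] at hrow
  rw [hrow, div_self (by exact_mod_cast rowCount_apply_self_ne_zero L i)]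

lemma planMatrix_mem_doublyStochastic [DecidableEq ι] (h : IsTransportPlan L M g) :
    planMatrix L M g ∈ doublyStochastic ℝ ι := by
  refine mem_doublyStochastic_iff_sum.2 ⟨fun i j => ?_, h.sum_planMatrix_row, fun j => ?_⟩
  · exact div_nonneg (h.1 _ _) (by positivity)
  · simpa only [← planMatrix_transpose, transpose_apply] using h.swap.sum_planMatrix_row j

lemma sum_planMatrix_mul_cost (h : IsTransportPlan L M g) (c : X → X → ℝ) :
    ∑ i, ∑ j, planMatrix L M g i j * c (L i) (M j) = ∑ x, ∑ y, g x y * c x y := by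
  simp only [h.sum_planMatrix_mul]
  refine (sum_comp_eq_sum_rowCount_mul L
    fun x => (∑ y, g x y * c x y) / rowCount L x).trans (sum_congr rfl fun x _ => ?_)
  refine mul_div_cancel_of_imp' fun hx => sum_eq_zero fun y _ => ?_
  rw [h.eq_zero_of_rowCount_left_eq_zero (by exact_mod_cast hx), zero_mul]

lemma exists_perm_sum_le [DecidableEq ι] (h : IsTransportPlan L M g) (c : X → X → ℝ) :
    ∃ σ : Equiv.Perm ι, ∑ i, c (L (σ i)) (M i) ≤ ∑ x, ∑ y, g x y * c x y := by
  obtain ⟨σ, hσ⟩ := exists_perm_sum_le_of_mem_doublyStochastic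
    h.planMatrix_mem_doublyStochastic fun i j => c (L i) (M j)
  refine ⟨σ⁻¹, ?_⟩
  rw [← h.sum_planMatrix_mul_cost, ← Equiv.sum_comp σ]
  simpa using hσ

end IsTransportPlan

end EmpiricalTransport

lemma matDist_eq_sum_nHam_div {s n : ℕ} (L M : Fin s → Fin n → Bool) :
    matDist L M = (∑ i, nHam (L i) (M i)) / s := by
  simp only [matDist, nHam, ← sum_div, div_div, mul_comm]

lemma isFlow_rowDist_iff {s n : ℕ} (hs : s ≠ 0) (L M : Fin s → Fin n → Bool)
    (f : (Fin n → Bool) → (Fin n → Bool) → ℝ) :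
    IsFlow (rowDist L) (rowDist M) f ↔ IsTransportPlan L M fun x y => s * f x y := by
  have hs' : (0 : ℝ) < s := by positivity
  simp only [IsFlow, IsTransportPlan, rowDist, rowCount, ← mul_sum,
    mul_nonneg_iff_of_pos_left hs', eq_div_iff hs'.ne', mul_comm _ (s : ℝ)]

theorem stmt_9_general {s n : ℕ} (hs : 0 < s)
    (L M : Fin s → Fin n → Bool) :
    emd (rowDist L) (rowDist M) = ⨅ π : Equiv.Perm (Fin s), matDist (fun i => L (π i)) M := by
  have hs' : (0 : ℝ) < s := by positivity
  refine csInf_eq_csInf_of_forall_exists_le ?_ ?_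
  · rintro _ ⟨f, hf, rfl⟩
    obtain ⟨π, hπ⟩ := ((isFlow_rowDist_iff hs.ne' L M f).1 hf).exists_perm_sum_le nHam
    refine ⟨_, ⟨π, rfl⟩, ?_⟩
    dsimp only
    rw [matDist_eq_sum_nHam_div, div_le_iff₀ hs', mul_comm, mul_sum]
    simpa only [mul_sum, mul_assoc] using hπ
  · rintro _ ⟨π, rfl⟩
    let f x y := (pairCount (fun i => L (π i)) M x y : ℝ) / s
    have hf : IsFlow (rowDist L) (rowDist M) f := by
      rw [isFlow_rowDist_iff hs.ne']
      simpa only [f, mul_div_cancel₀ _ hs'.ne', IsTransportPlan, rowCount_comp_perm]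
        using isTransportPlan_pairCount (fun i => L (π i)) M
    refine ⟨_, ⟨f, hf, rfl⟩, ?_⟩
    dsimp only
    rw [matDist_eq_sum_nHam_div, ← sum_pairCount_mul]
    simp only [f, div_mul_eq_mul_div, sum_div, le_rfl]

/-- If `D₁` and `D₂` are the distributions of a uniformly random row of
the `s × n` Boolean matrices `L` and `M` respectively, then the Earth Mover Distance
between `D₁` and `D₂` equals the minimum, over all permutations `π` of the rows, of the
normalized Hamming distance between `L^π` and `M`. -/
theorem stmt_9 {s n : ℕ} (hs : 0 < s) (hn : 0 < n)
    (L M : Fin s → Fin n → Bool) :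
    emd (rowDist L) (rowDist M) = ⨅ π : Equiv.Perm (Fin s), matDist (fun i => L (π i)) M :=
  stmt_9_general hs L M
end

section
/- Any property P of distributions over {0,1}^n that is ε-testable by an adaptive algorithm using s samples and q queries is also ε-testable by a non-adaptive algorithm using s samples and at most 2^q − 1 queries. -/
/-- An adaptive tester for distributions over `{0,1}^n`, using `s` samples and `q`
queries. It has a finite coin space `Fin m` with a probability mass function `coin`.
Given the coin outcome and the list of answers received so far, `query` gives the next
query: a pair (sample index, bit index). After `q` queries, `accept` decides the output
from the coins and the answer history. -/
structure AdaptiveTester (n s q : ℕ) where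
  m : ℕ
  coin : Fin m → ℝ
  coin_nonneg : ∀ r, 0 ≤ coin r
  coin_sum : ∑ r, coin r = 1
  query : Fin m → List Bool → Fin s × Fin n
  accept : Fin m → List Bool → Bool

/-- The list of answers obtained after `k` steps of adaptively querying the sampled
vectors `V` with next-query function `qf`. -/
def answers {n s : ℕ} (qf : List Bool → Fin s × Fin n)
    (V : Fin s → Fin n → Bool) : ℕ → List Bool
  | 0 => []
  | k + 1 =>
      let h := answers qf V k
      h ++ [V (qf h).1 (qf h).2]

/-- The probability that the adaptive tester `T` accepts, when the `s` samples are drawn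
independently from the distribution `D`. -/
noncomputable def AdaptiveTester.acceptProb {n s q : ℕ} (T : AdaptiveTester n s q)
    (D : (Fin n → Bool) → ℝ) : ℝ :=
  ∑ r, T.coin r * ∑ V : Fin s → Fin n → Bool,
    (∏ i, D (V i)) * (if T.accept r (answers (T.query r) V q) then 1 else 0)

/-- A non-adaptive tester: all `q` queries are fixed as a function of the coins alone,
before any answers are seen. -/
structure NonAdaptiveTester (n s q : ℕ) where
  m : ℕ
  coin : Fin m → ℝ
  coin_nonneg : ∀ r, 0 ≤ coin r
  coin_sum : ∑ r, coin r = 1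
  query : Fin m → Fin q → Fin s × Fin n
  accept : Fin m → (Fin q → Bool) → Bool

/-- The probability that the non-adaptive tester `T` accepts, when the `s` samples are
drawn independently from the distribution `D`. -/
noncomputable def NonAdaptiveTester.acceptProb {n s q : ℕ} (T : NonAdaptiveTester n s q)
    (D : (Fin n → Bool) → ℝ) : ℝ :=
  ∑ r, T.coin r * ∑ V : Fin s → Fin n → Bool,
    (∏ i, D (V i)) *
      (if T.accept r (fun k => V (T.query r k).1 (T.query r k).2) then 1 else 0)

/-- `D` is `ε`-far (in Earth Mover Distance) from every distribution in the property `P`. -/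
def FarFrom {n : ℕ} (ε : ℝ) (P : Set ((Fin n → Bool) → ℝ))
    (D : (Fin n → Bool) → ℝ) : Prop :=
  ∀ D' ∈ P, ε < emd D D'

/-- The adaptive tester `T` `ε`-tests the property `P`: it accepts members of `P` with
probability at least `2/3` and rejects distributions `ε`-far from `P` with probability
at least `2/3`. -/
def EpsTestsA {n s q : ℕ} (T : AdaptiveTester n s q)
    (P : Set ((Fin n → Bool) → ℝ)) (ε : ℝ) : Prop :=
  (∀ D, IsDist D → D ∈ P → 2 / 3 ≤ T.acceptProb D) ∧
  (∀ D, IsDist D → FarFrom ε P D → T.acceptProb D ≤ 1 / 3)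

/-- The non-adaptive tester `T` `ε`-tests the property `P`. -/
def EpsTestsN {n s q : ℕ} (T : NonAdaptiveTester n s q)
    (P : Set ((Fin n → Bool) → ℝ)) (ε : ℝ) : Prop :=
  (∀ D, IsDist D → D ∈ P → 2 / 3 ≤ T.acceptProb D) ∧
  (∀ D, IsDist D → FarFrom ε P D → T.acceptProb D ≤ 1 / 3)

/-! The coins being fixed, an adaptive tester with `q` queries is a binary decision tree of
depth `q`: its internal nodes are the answer histories of length `< q`, and there are
`2^q - 1` of them. The non-adaptive tester queries, for every node, the bit the adaptive
tester would ask there, and then replays the adaptive run by looking the answers it meets up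
in this table. For every coin outcome and every sample the two testers take the same
decision, so their acceptance probabilities agree. -/

/-- Heap numbering of the nodes of the complete binary tree: the histories of length `k`
receive the indices in `[2^k - 1, 2^(k+1) - 1)`. -/
def historyIndex : List Bool → ℕ
  | [] => 0
  | b :: t => Nat.bit b (historyIndex t) + 1

def historyOfIndex : ℕ → List Bool
  | 0 => []
  | m + 1 => m.bodd :: historyOfIndex m.div2
decreasing_by exact Nat.lt_succ_of_le (Nat.div_le_self m 2)

theorem historyOfIndex_historyIndex (h : List Bool) : historyOfIndex (historyIndex h) = h := by
  induction h with
  | nil => simp [historyIndex, historyOfIndex]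
  | cons b t ih => simp [historyIndex, historyOfIndex, Nat.bodd_bit, Nat.div2_bit, ih]

theorem historyIndex_add_two_le (h : List Bool) : historyIndex h + 2 ≤ 2 ^ (h.length + 1) := by
  induction h with
  | nil => simp [historyIndex]
  | cons b t ih =>
    rw [List.length_cons, pow_succ, historyIndex, Nat.bit_val]
    cases b <;> simp only [Bool.toNat_false, Bool.toNat_true] <;> omega

theorem historyIndex_lt_of_length_lt {q : ℕ} {h : List Bool} (hq : h.length < q) :
    historyIndex h < 2 ^ q - 1 := by
  have := Nat.pow_le_pow_right two_pos hq
  have := historyIndex_add_two_le h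
  omega

def oracleHistory (oracle : List Bool → Bool) : ℕ → List Bool
  | 0 => []
  | k + 1 => oracleHistory oracle k ++ [oracle (oracleHistory oracle k)]

theorem length_oracleHistory (oracle : List Bool → Bool) (k : ℕ) :
    (oracleHistory oracle k).length = k := by
  induction k with
  | zero => rfl
  | succ k ih => simp [oracleHistory, ih]

theorem oracleHistory_congr {f g : List Bool → Bool} {q : ℕ}
    (hfg : ∀ h : List Bool, h.length < q → f h = g h) {k : ℕ} (hk : k ≤ q) :
    oracleHistory f k = oracleHistory g k := by
  induction k with
  | zero => rfl
  | succ k ih =>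
    have hlen : (oracleHistory f k).length < q := by
      rw [length_oracleHistory]; omega
    rw [oracleHistory, oracleHistory, hfg _ hlen, ih (by omega)]

theorem answers_eq_oracleHistory {n s : ℕ} (qf : List Bool → Fin s × Fin n)
    (V : Fin s → Fin n → Bool) (k : ℕ) :
    answers qf V k = oracleHistory (fun h => V (qf h).1 (qf h).2) k := by
  induction k with
  | zero => rfl
  | succ k ih => rw [answers, oracleHistory, ih]

/-- The default `false` is never read: the runs replayed below only visit nodes. -/
def tableLookup {q : ℕ} (A : Fin (2 ^ q - 1) → Bool) (h : List Bool) : Bool :=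
  if hh : historyIndex h < 2 ^ q - 1 then A ⟨historyIndex h, hh⟩ else false

namespace AdaptiveTester

variable {n s q : ℕ}

def toNonAdaptive (T : AdaptiveTester n s q) : NonAdaptiveTester n s (2 ^ q - 1) where
  m := T.m
  coin := T.coin
  coin_nonneg := T.coin_nonneg
  coin_sum := T.coin_sum
  query r k := T.query r (historyOfIndex k)
  accept r A := T.accept r (oracleHistory (tableLookup A) q)

theorem toNonAdaptive_accept_eq (T : AdaptiveTester n s q) (r : Fin T.m)
    (V : Fin s → Fin n → Bool) :
    T.toNonAdaptive.accept r (fun k => V (T.toNonAdaptive.query r k).1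
      (T.toNonAdaptive.query r k).2) = T.accept r (answers (T.query r) V q) := by
  refine congrArg (T.accept r) ?_
  rw [answers_eq_oracleHistory]
  refine oracleHistory_congr (fun h hq => ?_) le_rfl
  simp [toNonAdaptive, tableLookup, historyIndex_lt_of_length_lt hq,
    historyOfIndex_historyIndex]

theorem acceptProb_toNonAdaptive (T : AdaptiveTester n s q) (D : (Fin n → Bool) → ℝ) :
    T.toNonAdaptive.acceptProb D = T.acceptProb D := by
  refine Finset.sum_congr rfl fun r _ => ?_
  refine congrArg (T.coin r * ·) (Finset.sum_congr rfl fun V _ => ?_)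
  exact congrArg (fun b : Bool => (∏ i, D (V i)) * if b then (1 : ℝ) else 0)
    (toNonAdaptive_accept_eq T r V)

theorem epsTestsN_toNonAdaptive {T : AdaptiveTester n s q} {P : Set ((Fin n → Bool) → ℝ)}
    {ε : ℝ} (hT : EpsTestsA T P ε) : EpsTestsN T.toNonAdaptive P ε := by
  simpa only [EpsTestsA, EpsTestsN, acceptProb_toNonAdaptive] using hT

end AdaptiveTester

/-- Any property `P` of distributions over `{0,1}^n` that is
`ε`-testable by an adaptive algorithm using `s` samples and `q` queries is also
`ε`-testable by a non-adaptive algorithm using `s` samples and at most `2^q − 1`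
queries. -/
theorem stmt_10 {n s q : ℕ} (P : Set ((Fin n → Bool) → ℝ)) (ε : ℝ)
    (h : ∃ T : AdaptiveTester n s q, EpsTestsA T P ε) :
    ∃ T' : NonAdaptiveTester n s (2 ^ q - 1), EpsTestsN T' P ε := by
  obtain ⟨T, hT⟩ := h
  exact ⟨T.toNonAdaptive, AdaptiveTester.epsTestsN_toNonAdaptive hT⟩
end

section
/- For any index-invariant property P of distributions over {0,1}^n that is ε-testable by an adaptive algorithm using s samples and q queries, P is ε-testable by a non-adaptive algorithm using s samples and at most s·q ≤ q² queries. -/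
/-- The distribution `D_σ` obtained from `D` by permuting the indices of the vectors
in `{0,1}^n` by `σ`. -/
def permDist {n : ℕ} (σ : Equiv.Perm (Fin n)) (D : (Fin n → Bool) → ℝ) :
    (Fin n → Bool) → ℝ :=
  fun x => D (fun i => x (σ i))

/-- A property of distributions is index-invariant if it is closed under permuting the
indices `[n]`. -/
def IndexInvariant {n : ℕ} (P : Set ((Fin n → Bool) → ℝ)) : Prop :=
  ∀ D, ∀ σ : Equiv.Perm (Fin n), D ∈ P ↔ permDist σ D ∈ P

/-!
The non-adaptive tester draws the coins of `T` together with a uniformly random permutation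
`σ` of the indices, reads every sample at the indices `σ 0, …, σ (q - 1)`, and then runs `T`,
answering a query about the `p`-th distinct index that `T` asks for with the bit read at `σ p`.
For fixed samples `W`, let `π ↦ π * τ_π`, where `τ_π` sends `p` to the `p`-th distinct index
asked by `T` on the relabelled samples `W ∘ π`. This is injective, hence a bijection of the
permutations, and it turns the simulation with `π * τ_π` into the honest run of `T` on `W ∘ π`.
So the simulation accepts `D` with probability the average over `σ` of the acceptance
probability of `T` on `D_σ`, and by index invariance (EMD is invariant under relabelling the
indices as well) every `D_σ` lies in `P`, resp. is `ε`-far from `P`, whenever `D` does.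
-/

open Finset
open scoped BigOperators

section IndexedRun

variable {α : Type*} [DecidableEq α]

def appendIfNew (L : List α) (a : α) : List α :=
  if a ∈ L then L else L ++ [a]

lemma mem_appendIfNew (L : List α) (a : α) : a ∈ appendIfNew L a := by
  unfold appendIfNew; split_ifs <;> simp_all

lemma prefix_appendIfNew (L : List α) (a : α) : L <+: appendIfNew L a := by
  unfold appendIfNew; split_ifs
  · exact List.prefix_refl L
  · exact List.prefix_append L [a]

lemma length_appendIfNew_le (L : List α) (a : α) :
    (appendIfNew L a).length ≤ L.length + 1 := by
  unfold appendIfNew; split_ifs <;> simp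

lemma idxOf_appendIfNew_lt (L : List α) (a : α) : (appendIfNew L a).idxOf a < L.length + 1 :=
  (List.idxOf_lt_length_iff.mpr (mem_appendIfNew L a)).trans_le (length_appendIfNew_le L a)

lemma List.Nodup.appendIfNew {L : List α} (hL : L.Nodup) (a : α) :
    (appendIfNew L a).Nodup := by
  unfold _root_.appendIfNew; split_ifs with ha
  · exact hL
  · exact hL.append (List.nodup_singleton a) (by simpa using ha)

variable {n s : ℕ} (qf : List Bool → Fin s × Fin n)

/-- A run of the adaptive query function `qf` that also records the list of distinct
bit indices queried so far, in order of first appearance. The answer to a query `x` is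
`ans L x`, where `L` is that list with the index of `x` already recorded. -/
def indexedRun (ans : List (Fin n) → Fin s × Fin n → Bool) : ℕ → List Bool × List (Fin n)
  | 0 => ([], [])
  | k + 1 =>
      let x := qf (indexedRun ans k).1
      let L := appendIfNew (indexedRun ans k).2 x.2
      ((indexedRun ans k).1 ++ [ans L x], L)

def trueRun (V : Fin s → Fin n → Bool) : ℕ → List Bool × List (Fin n) :=
  indexedRun qf fun _ x => V x.1 x.2

def freshRun (B : Fin s → ℕ → Bool) : ℕ → List Bool × List (Fin n) :=
  indexedRun qf fun L x => B x.1 (L.idxOf x.2)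

lemma trueRun_fst (V : Fin s → Fin n → Bool) : ∀ k, (trueRun qf V k).1 = answers qf V k
  | 0 => rfl
  | k + 1 => by
      have ih := trueRun_fst V k
      simp only [trueRun] at ih
      simp only [trueRun, indexedRun, answers, ih]

lemma indexedRun_snd_nodup (ans : List (Fin n) → Fin s × Fin n → Bool) :
    ∀ k, (indexedRun qf ans k).2.Nodup
  | 0 => List.nodup_nil
  | k + 1 => (indexedRun_snd_nodup ans k).appendIfNew _

lemma indexedRun_snd_length_le (ans : List (Fin n) → Fin s × Fin n → Bool) :
    ∀ k, (indexedRun qf ans k).2.length ≤ k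
  | 0 => le_rfl
  | k + 1 => (length_appendIfNew_le _ _).trans (Nat.succ_le_succ (indexedRun_snd_length_le ans k))

lemma freshRun_congr {B B' : Fin s → ℕ → Bool} :
    ∀ k, (∀ i p, p < k → B i p = B' i p) → freshRun qf B k = freshRun qf B' k
  | 0, _ => rfl
  | k + 1, hB => by
      have ih := freshRun_congr k fun i p hp => hB i p (hp.trans k.lt_succ_self)
      simp only [freshRun] at ih
      simp only [freshRun, indexedRun, ih]
      rw [hB _ _ ((idxOf_appendIfNew_lt _ _).trans_le
        (Nat.succ_le_succ (indexedRun_snd_length_le qf _ k)))]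

end IndexedRun

section Relabel

variable {n s : ℕ} (qf : List Bool → Fin s × Fin n)

lemma freshRun_eq_trueRun (V : Fin s → Fin n → Bool) (g : ℕ → Fin n) :
    ∀ k, (∀ p (hp : p < (trueRun qf V k).2.length), g p = (trueRun qf V k).2[p]) →
      freshRun qf (fun i p => V i (g p)) k = trueRun qf V k
  | 0, _ => rfl
  | k + 1, hg => by
      set L := (trueRun qf V k).2
      set a := (qf (trueRun qf V k).1).2
      change ∀ p (hp : p < (appendIfNew L a).length), g p = (appendIfNew L a)[p] at hg
      have hpre := prefix_appendIfNew L a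
      have ih := freshRun_eq_trueRun V g k fun p hp => by
        rw [hg p (hp.trans_le hpre.length_le), hpre.getElem hp]
      have ha : g ((appendIfNew L a).idxOf a) = a := by
        rw [hg _ (List.idxOf_lt_length_iff.mpr (mem_appendIfNew L a))]
        exact List.getElem_idxOf _
      simp only [freshRun, trueRun] at ih ⊢
      simp only [indexedRun, ih]
      exact ha ▸ rfl

lemma exists_perm_ofNat_eq_getElem [NeZero n] {L : List (Fin n)} (hL : L.Nodup) :
    ∃ σ : Equiv.Perm (Fin n), ∀ p (hp : p < L.length), σ (Fin.ofNat n p) = L[p] := by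
  have hlen : L.length ≤ n := by simpa using hL.length_le_card
  obtain ⟨σ, hσ⟩ := Equiv.Perm.exists_extending_pair (Fin.castLE hlen) L.get
    (Fin.castLE_injective hlen) (List.nodup_iff_injective_get.mp hL)
  refine ⟨σ, fun p hp => ?_⟩
  have hp' : Fin.ofNat n p = Fin.castLE hlen ⟨p, hp⟩ :=
    Fin.ext (Nat.mod_eq_of_lt (hp.trans_le hlen))
  rw [hp', hσ]
  rfl

variable [NeZero n]

noncomputable def listPerm (L : List (Fin n)) : Equiv.Perm (Fin n) :=
  if hL : L.Nodup then (exists_perm_ofNat_eq_getElem hL).choose else 1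

lemma listPerm_ofNat {L : List (Fin n)} (hL : L.Nodup) (p : ℕ) (hp : p < L.length) :
    listPerm L (Fin.ofNat n p) = L[p] := by
  rw [listPerm, dif_pos hL]
  exact (exists_perm_ofNat_eq_getElem hL).choose_spec p hp

variable (W : Fin s → Fin n → Bool) (k : ℕ)

noncomputable def relabel (π : Equiv.Perm (Fin n)) : Equiv.Perm (Fin n) :=
  π * listPerm (trueRun qf (fun i a => W i (π a)) k).2

lemma freshRun_relabel (π : Equiv.Perm (Fin n)) :
    freshRun qf (fun i p => W i (relabel qf W k π (Fin.ofNat n p))) k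
      = trueRun qf (fun i a => W i (π a)) k :=
  freshRun_eq_trueRun qf (fun i a => W i (π a)) _ k (listPerm_ofNat (indexedRun_snd_nodup qf _ k))

lemma relabel_injective : Function.Injective (relabel qf W k) := by
  intro π₁ π₂ h
  have hL : (trueRun qf (fun i a => W i (π₁ a)) k).2
      = (trueRun qf (fun i a => W i (π₂ a)) k).2 := by
    rw [← freshRun_relabel, ← freshRun_relabel, h]
  rw [relabel, relabel, hL] at h
  exact mul_right_cancel h

theorem sum_perm_freshRun {M : Type*} [AddCommMonoid M] (F : List Bool → M) :
    ∑ σ : Equiv.Perm (Fin n), F (freshRun qf (fun i p => W i (σ (Fin.ofNat n p))) k).1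
      = ∑ π : Equiv.Perm (Fin n), F (answers qf (fun i a => W i (π a)) k) := by
  rw [← (relabel_injective qf W k).bijective_of_finite.sum_comp]
  simp only [freshRun_relabel, trueRun_fst]

end Relabel

section PermDist

variable {n : ℕ}

/-- Precomposition with `σ`, so that `permDist σ D = D ∘ coordPerm σ`. -/
def coordPerm (σ : Equiv.Perm (Fin n)) : (Fin n → Bool) ≃ (Fin n → Bool) :=
  Equiv.arrowCongr σ.symm (Equiv.refl Bool)

lemma coordPerm_apply (σ : Equiv.Perm (Fin n)) (x : Fin n → Bool) :
    coordPerm σ x = fun i => x (σ i) := rfl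

lemma permDist_mul (σ τ : Equiv.Perm (Fin n)) (D : (Fin n → Bool) → ℝ) :
    permDist σ (permDist τ D) = permDist (σ * τ) D := rfl

lemma permDist_inv_permDist (σ : Equiv.Perm (Fin n)) (D : (Fin n → Bool) → ℝ) :
    permDist σ⁻¹ (permDist σ D) = D := by
  rw [permDist_mul, inv_mul_cancel]
  rfl

lemma IsDist.permDist {D : (Fin n → Bool) → ℝ} (hD : IsDist D) (σ : Equiv.Perm (Fin n)) :
    IsDist (permDist σ D) :=
  ⟨fun _ => hD.1 _, (Equiv.sum_comp (coordPerm σ) D).trans hD.2⟩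

lemma hammingDist_comp_perm {ι β : Type*} [Fintype ι] [DecidableEq β] (σ : Equiv.Perm ι)
    (x y : ι → β) : hammingDist (fun i => x (σ i)) (fun i => y (σ i)) = hammingDist x y :=
  Finset.card_equiv σ (by simp)

lemma nHam_coordPerm (σ : Equiv.Perm (Fin n)) (x y : Fin n → Bool) :
    nHam (coordPerm σ x) (coordPerm σ y) = nHam x y := by
  simp only [nHam, coordPerm_apply, hammingDist_comp_perm]

lemma IsFlow.permDist {D₁ D₂ : (Fin n → Bool) → ℝ} {f : (Fin n → Bool) → (Fin n → Bool) → ℝ}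
    (hf : IsFlow D₁ D₂ f) (σ : Equiv.Perm (Fin n)) :
    IsFlow (permDist σ D₁) (permDist σ D₂) fun x y => f (coordPerm σ x) (coordPerm σ y) :=
  ⟨fun _ _ => hf.1 _ _, fun _ => (Equiv.sum_comp (coordPerm σ) _).trans (hf.2.1 _),
    fun y => (Equiv.sum_comp (coordPerm σ) (f · (coordPerm σ y))).trans (hf.2.2 _)⟩

lemma flowCost_coordPerm (σ : Equiv.Perm (Fin n)) (f : (Fin n → Bool) → (Fin n → Bool) → ℝ) :
    ∑ x, ∑ y, f (coordPerm σ x) (coordPerm σ y) * nHam x y = ∑ x, ∑ y, f x y * nHam x y := by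
  calc _ = ∑ x, ∑ y, f (coordPerm σ x) (coordPerm σ y)
          * nHam (coordPerm σ x) (coordPerm σ y) := by simp only [nHam_coordPerm]
    _ = _ := by
      rw [Equiv.sum_comp (coordPerm σ) fun x => ∑ y, f x (coordPerm σ y) * nHam x (coordPerm σ y)]
      exact Finset.sum_congr rfl fun x _ => Equiv.sum_comp (coordPerm σ) fun y => f x y * nHam x y

lemma flowCosts_subset_permDist (σ : Equiv.Perm (Fin n)) (D₁ D₂ : (Fin n → Bool) → ℝ) :
    { c | ∃ f, IsFlow D₁ D₂ f ∧ ∑ x, ∑ y, f x y * nHam x y = c } ⊆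
      { c | ∃ f, IsFlow (permDist σ D₁) (permDist σ D₂) f ∧ ∑ x, ∑ y, f x y * nHam x y = c } :=
  fun _ ⟨f, hf, hc⟩ => ⟨_, hf.permDist σ, (flowCost_coordPerm σ f).trans hc⟩

lemma emd_permDist (σ : Equiv.Perm (Fin n)) (D₁ D₂ : (Fin n → Bool) → ℝ) :
    emd (permDist σ D₁) (permDist σ D₂) = emd D₁ D₂ := by
  refine congrArg sInf (subset_antisymm ?_ (flowCosts_subset_permDist σ D₁ D₂))
  simpa only [permDist_inv_permDist] using
    flowCosts_subset_permDist σ⁻¹ (permDist σ D₁) (permDist σ D₂)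

lemma FarFrom.permDist {P : Set ((Fin n → Bool) → ℝ)} {ε : ℝ} {D : (Fin n → Bool) → ℝ}
    (hD : FarFrom ε P D) (hP : IndexInvariant P) (σ : Equiv.Perm (Fin n)) :
    FarFrom ε P (permDist σ D) := by
  intro D' hD'
  have h := hD _ ((hP D' σ⁻¹).mp hD')
  rwa [← emd_permDist σ, permDist_mul, mul_inv_cancel] at h

end PermDist

section Simulation

variable {n s q : ℕ}

noncomputable def NonAdaptiveTester.ofFintype {ι : Type*} [Fintype ι] (coin : ι → ℝ)
    (coin_nonneg : ∀ c, 0 ≤ coin c) (coin_sum : ∑ c, coin c = 1)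
    (query : ι → Fin q → Fin s × Fin n) (accept : ι → (Fin q → Bool) → Bool) :
    NonAdaptiveTester n s q where
  m := Fintype.card ι
  coin r := coin ((Fintype.equivFin ι).symm r)
  coin_nonneg _ := coin_nonneg _
  coin_sum := ((Fintype.equivFin ι).symm.sum_comp coin).trans coin_sum
  query r := query ((Fintype.equivFin ι).symm r)
  accept r := accept ((Fintype.equivFin ι).symm r)

lemma NonAdaptiveTester.acceptProb_ofFintype {ι : Type*} [Fintype ι] (coin : ι → ℝ)
    (coin_nonneg : ∀ c, 0 ≤ coin c) (coin_sum : ∑ c, coin c = 1)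
    (query : ι → Fin q → Fin s × Fin n) (accept : ι → (Fin q → Bool) → Bool)
    (D : (Fin n → Bool) → ℝ) :
    (ofFintype coin coin_nonneg coin_sum query accept).acceptProb D
      = ∑ c, coin c * ∑ V : Fin s → Fin n → Bool, (∏ i, D (V i)) *
          if accept c (fun k => V (query c k).1 (query c k).2) then 1 else 0 :=
  (Fintype.equivFin ι).symm.sum_comp fun c => coin c * ∑ V : Fin s → Fin n → Bool,
    (∏ i, D (V i)) * if accept c (fun k => V (query c k).1 (query c k).2) then 1 else 0

lemma AdaptiveTester.acceptProb_permDist (T : AdaptiveTester n s q) (σ : Equiv.Perm (Fin n))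
    (D : (Fin n → Bool) → ℝ) :
    T.acceptProb (permDist σ D) = ∑ r, T.coin r * ∑ W : Fin s → Fin n → Bool,
      (∏ i, D (W i)) * if T.accept r (answers (T.query r) (fun i a => W i (σ⁻¹ a)) q)
        then 1 else 0 := by
  refine Finset.sum_congr rfl fun r _ => congrArg _ ?_
  rw [← (Equiv.piCongrRight fun _ => coordPerm σ⁻¹).sum_comp]
  refine Finset.sum_congr rfl fun W _ => ?_
  simp only [permDist, Equiv.piCongrRight_apply, Pi.map_apply, coordPerm_apply,
    Equiv.Perm.coe_inv, Equiv.symm_apply_apply]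
  rfl

variable [NeZero n]

/-- Query `k ≃ (i, p)` reads sample `i` at index `σ (p mod n)`; the reduction mod `n` is never
seen by the simulation, as `T` asks for at most `n` distinct indices. -/
noncomputable def AdaptiveTester.toNonAdaptive_s11 (T : AdaptiveTester n s q) :
    NonAdaptiveTester n s (s * q) :=
  NonAdaptiveTester.ofFintype (ι := Fin T.m × Equiv.Perm (Fin n))
    (fun c => T.coin c.1 / Fintype.card (Equiv.Perm (Fin n)))
    (fun _ => div_nonneg (T.coin_nonneg _) (Nat.cast_nonneg _))
    (by
      have hN : (Fintype.card (Equiv.Perm (Fin n)) : ℝ) ≠ 0 := by positivity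
      simp only [Fintype.sum_prod_type, Finset.sum_const, card_univ, nsmul_eq_mul,
        mul_div_cancel₀ _ hN, T.coin_sum])
    (fun c k => ((finProdFinEquiv.symm k).1, c.2 (Fin.ofNat n (finProdFinEquiv.symm k).2)))
    (fun c A => T.accept c.1 (freshRun (T.query c.1)
      (fun i p => if hp : p < q then A (finProdFinEquiv (i, ⟨p, hp⟩)) else false) q).1)

lemma AdaptiveTester.acceptProb_toNonAdaptive_s11 (T : AdaptiveTester n s q)
    (D : (Fin n → Bool) → ℝ) :
    T.toNonAdaptive_s11.acceptProb D = 𝔼 σ, T.acceptProb (permDist σ D) := by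
  have hsim : ∀ (σ : Equiv.Perm (Fin n)) (V : Fin s → Fin n → Bool) r,
      freshRun (T.query r) (fun i p => if hp : p < q then
          V (finProdFinEquiv.symm (finProdFinEquiv (i, ⟨p, hp⟩))).1
            (σ (Fin.ofNat n (finProdFinEquiv.symm (finProdFinEquiv (i, ⟨p, hp⟩))).2))
          else false) q
        = freshRun (T.query r) (fun i p => V i (σ (Fin.ofNat n p))) q := fun σ V r =>
    freshRun_congr _ q fun i p hp => by simp only [dif_pos hp, Equiv.symm_apply_apply]
  rw [toNonAdaptive_s11, NonAdaptiveTester.acceptProb_ofFintype, Fintype.expect_eq_sum_div_card,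
    ← Equiv.sum_comp (Equiv.inv _) fun σ => T.acceptProb (permDist σ D)]
  simp only [acceptProb_permDist, Fintype.sum_prod_type, hsim, Equiv.inv_apply, inv_inv,
    Finset.mul_sum, Finset.sum_div]
  conv_rhs => rw [Finset.sum_comm]
  refine Finset.sum_congr rfl fun r _ => ?_
  rw [Finset.sum_comm, Finset.sum_comm (γ := Equiv.Perm (Fin n))]
  refine Finset.sum_congr rfl fun V _ => ?_
  rw [sum_perm_freshRun _ V q fun h =>
    T.coin r / Fintype.card (Equiv.Perm (Fin n)) * ((∏ i, D (V i)) * if T.accept r h then 1 else 0)]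
  simp only [mul_div_right_comm]

end Simulation

/-- For any index-invariant property `P` of distributions over
`{0,1}^n` that is `ε`-testable by an adaptive algorithm using `s` samples and `q`
queries, `P` is `ε`-testable by a non-adaptive algorithm using `s` samples and at most
`s·q` (≤ `q²`) queries. -/
theorem stmt_11 {n s q : ℕ} (P : Set ((Fin n → Bool) → ℝ)) (ε : ℝ)
    (hinv : IndexInvariant P)
    (h : ∃ T : AdaptiveTester n s q, EpsTestsA T P ε) :
    ∃ T' : NonAdaptiveTester n s (s * q), EpsTestsN T' P ε := by
  obtain ⟨T, hacc, hrej⟩ := h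
  obtain ⟨r, -, -⟩ := Finset.exists_ne_zero_of_sum_ne_zero (T.coin_sum ▸ one_ne_zero)
  have : NeZero n := NeZero.of_pos (T.query r []).2.pos
  refine ⟨T.toNonAdaptive_s11, fun D hD hP => ?_, fun D hD hfar => ?_⟩
  · rw [T.acceptProb_toNonAdaptive_s11]
    exact le_expect univ_nonempty fun σ _ => hacc _ (hD.permDist σ) ((hinv D σ).mp hP)
  · rw [T.acceptProb_toNonAdaptive_s11]
    exact expect_le univ_nonempty fun σ _ => hrej _ (hD.permDist σ) (hfar.permDist hinv σ)
end

section
/- Let A be a k × ℓ binary matrix whose columns are pairwise at normalized Hamming distance at least 1/3, let ℓ' divide n, and let L be the k × n matrix obtained by blowing up each entry of A to n/ℓ copies along the rows (so L has ℓ equivalence classes of identical columns each of size n/ℓ). Let M be any k × n binary matrix whose columns take at most ℓ' distinct values, where ℓ' ≤ ℓ/2^{10}. Then for every permutation π of the rows, the normalized Hamming distance between L^π and M is at least 1/8. -/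
/-!
Call a column `j` of `L^π` *close* if it is within `k/6` of the column `j` of `M`. Two close
columns sharing the same `M`-column are within `k/3` of each other, so they come from the same
column of `A`. Hence each of the at most `ℓ'` column values of `M` accounts for at most `n/ℓ`
close columns, and at most `n/2^10` columns are close. Every other column contributes at least
`k/6` mismatches, for a total of at least `(1 - 2^{-10}) k n / 6 ≥ k n / 8`.
-/

open Finset

section Hamming

variable {ι κ γ β : Type*} [Fintype ι] [Fintype κ] [DecidableEq β]

theorem sum_hammingDist_eq_sum_hammingDist_transpose (L M : ι → κ → β) :
    ∑ i, hammingDist (L i) (M i) = ∑ j, hammingDist (fun i => L i j) (fun i => M i j) := by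
  simp only [hammingDist, card_filter]
  exact sum_comm

theorem hammingDist_comp_equiv (σ : ι ≃ ι) (x y : ι → β) :
    hammingDist (fun i => x (σ i)) (fun i => y (σ i)) = hammingDist x y := by
  simp only [hammingDist, card_filter]
  exact σ.sum_comp fun i => if x i ≠ y i then 1 else 0

theorem eq_of_hammingDist_add_hammingDist_lt {a : γ → ι → β} {δ : ℝ}
    (ha : ∀ c c', c ≠ c' → δ ≤ hammingDist (a c) (a c')) {c c' : γ} {y : ι → β}
    (h : (hammingDist (a c) y : ℝ) + hammingDist (a c') y < δ) : c = c' := by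
  by_contra hne
  have htri : (hammingDist (a c) (a c') : ℝ) ≤ hammingDist (a c) y + hammingDist (a c') y := by
    rw [hammingDist_comm (a c') y]
    exact_mod_cast hammingDist_triangle _ _ _
  linarith [ha c c' hne]

theorem card_filter_two_mul_hammingDist_lt_le [DecidableEq γ] {a : γ → ι → β} {δ : ℝ}
    (ha : ∀ c c', c ≠ c' → δ ≤ hammingDist (a c) (a c')) (φ : κ → γ) {m : ℕ}
    (hφ : ∀ c, #{j | φ j = c} ≤ m) (v : κ → ι → β) :
    #{j | 2 * (hammingDist (a (φ j)) (v j) : ℝ) < δ} ≤ m * #(univ.image v) := by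
  refine card_le_mul_card_image_of_maps_to (fun j _ => mem_image_of_mem v (mem_univ j)) m ?_
  intro b _
  obtain hempty | ⟨j₁, hj₁⟩ := ({j | 2 * (hammingDist (a (φ j)) (v j) : ℝ) < δ ∧ v j = b} :
    Finset κ).eq_empty_or_nonempty
  · simp only [filter_filter, hempty, card_empty, zero_le]
  refine (card_le_card fun j hj => ?_).trans (hφ (φ j₁))
  simp only [mem_filter, mem_univ, true_and] at hj hj₁ ⊢
  obtain ⟨hj, rfl⟩ := hj
  obtain ⟨hj₁, hv⟩ := hj₁
  rw [hv] at hj₁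
  exact eq_of_hammingDist_add_hammingDist_lt ha (by linarith)

theorem card_compl_mul_le_two_mul_sum {d : κ → ℝ} (hd : ∀ j, 0 ≤ d j) (δ : ℝ) :
    ((Fintype.card κ : ℝ) - #{j | 2 * d j < δ}) * δ ≤ 2 * ∑ j, d j := by
  classical
  set S : Finset κ := {j | 2 * d j < δ}
  have hcard : (#S : ℝ) + #Sᶜ = Fintype.card κ := by exact_mod_cast card_add_card_compl S
  calc ((Fintype.card κ : ℝ) - #S) * δ = #Sᶜ • δ := by
        rw [← hcard, add_sub_cancel_left, nsmul_eq_mul]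
    _ ≤ ∑ j ∈ Sᶜ, 2 * d j := card_nsmul_le_sum _ _ _ fun j hj => by simpa [S] using hj
    _ ≤ ∑ j, 2 * d j := sum_le_univ_sum_of_nonneg fun j => by linarith [hd j]
    _ = 2 * ∑ j, d j := (mul_sum _ _ _).symm

theorem card_sub_mul_le_two_mul_sum_hammingDist [DecidableEq γ] {a : γ → ι → β} {δ : ℝ}
    (hδ : 0 ≤ δ) (ha : ∀ c c', c ≠ c' → δ ≤ hammingDist (a c) (a c')) (φ : κ → γ) {m : ℕ}
    (hφ : ∀ c, #{j | φ j = c} ≤ m) (v : κ → ι → β) :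
    ((Fintype.card κ : ℝ) - m * #(univ.image v)) * δ
      ≤ 2 * ∑ j, (hammingDist (a (φ j)) (v j) : ℝ) := by
  have hclose : (#{j | 2 * (hammingDist (a (φ j)) (v j) : ℝ) < δ} : ℝ) ≤ m * #(univ.image v) :=
    mod_cast card_filter_two_mul_hammingDist_lt_le ha φ hφ v
  refine le_trans ?_ (card_compl_mul_le_two_mul_sum (fun j => Nat.cast_nonneg _) δ)
  gcongr

end Hamming

theorem stmt_12_general (k n ℓ ℓ' : ℕ) (hk : 0 < k) (hn : 0 < n)
    (A : Fin k → Fin ℓ → Bool)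
    (hA : ∀ c c' : Fin ℓ, c ≠ c' →
      (1 : ℝ) / 3 ≤ (hammingDist (fun i => A i c) (fun i => A i c') : ℝ) / k)
    (φ : Fin n → Fin ℓ)
    (hφ : ∀ c : Fin ℓ, (Finset.univ.filter (fun j => φ j = c)).card = n / ℓ)
    (L : Fin k → Fin n → Bool) (hL : ∀ i j, L i j = A i (φ j))
    (M : Fin k → Fin n → Bool)
    (hM : ((Finset.univ : Finset (Fin n)).image (fun j => fun i => M i j)).card ≤ ℓ')
    (hℓ' : 2 ^ 10 * ℓ' ≤ ℓ) :
    ∀ π : Equiv.Perm (Fin k), (1 : ℝ) / 8 ≤ matDist (fun i => L (π i)) M := by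
  intro π
  have hkR : (0 : ℝ) < k := by exact_mod_cast hk
  have hsum : ∑ i, (hammingDist (L (π i)) (M i) : ℝ)
      = ∑ j, (hammingDist (fun i => A (π i) (φ j)) (fun i => M i j) : ℝ) := by
    exact_mod_cast (sum_hammingDist_eq_sum_hammingDist_transpose _ _).trans (by simp only [hL])
  have hfar : ∀ c c', c ≠ c' →
      (k : ℝ) / 3 ≤ hammingDist (fun i => A (π i) c) (fun i => A (π i) c') := by
    intro c c' hcc'
    have h := hA c c' hcc'
    rw [div_le_div_iff₀ (by norm_num) hkR] at h
    rw [hammingDist_comp_equiv π (fun i => A i c) (fun i => A i c')]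
    linarith
  have hbound := card_sub_mul_le_two_mul_sum_hammingDist (by positivity) hfar φ
    (fun c => (hφ c).le) fun j i => M i j
  have hclose : 2 ^ 10 * ((n / ℓ) * #(univ.image fun j i => M i j)) ≤ n :=
    calc 2 ^ 10 * ((n / ℓ) * #(univ.image fun j i => M i j)) ≤ n / ℓ * (2 ^ 10 * ℓ') := by
          rw [mul_left_comm]; exact Nat.mul_le_mul_left _ (Nat.mul_le_mul_left _ hM)
      _ ≤ n / ℓ * ℓ := Nat.mul_le_mul_left _ hℓ'
      _ ≤ n := Nat.div_mul_le_self n ℓ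
  have hcloseR : (2 : ℝ) ^ 10 * ((n / ℓ : ℕ) * #(univ.image fun j i => M i j)) ≤ n :=
    mod_cast hclose
  rw [Fintype.card_fin] at hbound
  rw [matDist, hsum, le_div_iff₀ (by positivity)]
  nlinarith

/-- Let `A` be a `k × ℓ` binary matrix whose columns are pairwise at
normalized Hamming distance at least `1/3`, let `ℓ` and `ℓ'` divide `n`, and let `L` be
the `k × n` blow-up of `A` along a map `φ : [n] → [ℓ]` all of whose fibers have size
`n/ℓ`. Let `M` be any `k × n` binary matrix whose columns take at most `ℓ'` distinct
values, where `2^10 · ℓ' ≤ ℓ`. Then for every permutation `π` of the rows, the normalized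
Hamming distance between `L^π` and `M` is at least `1/8`. -/
theorem stmt_12 (k n ℓ ℓ' : ℕ) (hk : 0 < k) (hn : 0 < n) (hℓ : 0 < ℓ)
    (hdvd : ℓ ∣ n) (hdvd' : ℓ' ∣ n)
    (A : Fin k → Fin ℓ → Bool)
    (hA : ∀ c c' : Fin ℓ, c ≠ c' →
      (1 : ℝ) / 3 ≤ (hammingDist (fun i => A i c) (fun i => A i c') : ℝ) / k)
    (φ : Fin n → Fin ℓ)
    (hφ : ∀ c : Fin ℓ, (Finset.univ.filter (fun j => φ j = c)).card = n / ℓ)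
    (L : Fin k → Fin n → Bool) (hL : ∀ i j, L i j = A i (φ j))
    (M : Fin k → Fin n → Bool)
    (hM : ((Finset.univ : Finset (Fin n)).image (fun j => fun i => M i j)).card ≤ ℓ')
    (hℓ' : 2 ^ 10 * ℓ' ≤ ℓ) :
    ∀ π : Equiv.Perm (Fin k), (1 : ℝ) / 8 ≤ matDist (fun i => L (π i)) M :=
  stmt_12_general k n ℓ ℓ' hk hn A hA φ hφ L hL M hM hℓ'
end

section
/- With FE as defined (FE(z,x) = 0·1^b·SE(GE(z)₁,x₁)⋯SE(GE(z)ₙ,xₙ)), for any z, z' ∈ [n]^m and any x ≠ x' ∈ {0,1}^n, δ_H(FE(z,x), FE(z',x')) ≥ ζk · δ_H(x, x'); and for any fixed z and any x, x', δ_H(FE(z,x), FE(z,x')) ≤ k · δ_H(x, x'), hence d_H(FE(z,x), FE(z,x')) ≤ d_H(x,x') for the normalized distances. -/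
/-- The index set of `{0,1}^N` with `N = 1 + b + k·n`: one special index, `b` indices for
the block of ones, and `n` blocks `C_j` of `k` indices each. -/
abbrev BigIndex (b n k : ℕ) := (Unit ⊕ Fin b) ⊕ (Fin n × Fin k)

/-- The encoding `FE(z,x) = 0 · 1^b · SE(GE(z)₁, x₁) ⋯ SE(GE(z)ₙ, xₙ) ∈ {0,1}^N`,
`N = 1 + b + k·n`. -/
def FE (b : ℕ) {n m k : ℕ} (SE : Fin n → Bool → Fin k → Bool)
    (GE : (Fin m → Fin n) → Fin n → Fin n)
    (z : Fin m → Fin n) (x : Fin n → Bool) : BigIndex b n k → Bool :=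
  fun idx => match idx with
  | Sum.inl (Sum.inl _) => false
  | Sum.inl (Sum.inr _) => true
  | Sum.inr p => SE (GE z p.1) (x p.1) p.2

/-!
`FE(z,x)` and `FE(z',x')` agree on the prefix `0·1^b`, and their `j`-th blocks are the code words
of `(GE(z)_j, x_j)` and `(GE(z')_j, x'_j)`. These pairs differ whenever `x_j ≠ x'_j`, whatever `GE`
does, so each such `j` contributes at least `ζk`. For equal `z` the blocks with `x_j = x'_j`
coincide and the others contribute at most `k`; normalizing uses `kn ≤ N`.
-/

open Finset

section HammingBlocks

variable {ι κ β : Type*} [Fintype ι] [Fintype κ] [DecidableEq β]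

theorem hammingDist_eq_sum_ite (x y : ι → β) :
    hammingDist x y = ∑ i, if x i ≠ y i then 1 else 0 :=
  card_filter _ _

theorem hammingDist_sum_type (x y : ι ⊕ κ → β) :
    hammingDist x y = hammingDist (x ∘ Sum.inl) (y ∘ Sum.inl) +
      hammingDist (x ∘ Sum.inr) (y ∘ Sum.inr) := by
  simp only [hammingDist_eq_sum_ite, Fintype.sum_sum_type, Function.comp_apply]

theorem hammingDist_prod_type (x y : ι × κ → β) :
    hammingDist x y = ∑ i, hammingDist (fun j => x (i, j)) (fun j => y (i, j)) := by
  simp only [hammingDist_eq_sum_ite, Fintype.sum_prod_type]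

theorem mul_hammingDist_le_sum (x y : ι → β) (d : ι → ℝ) (c : ℝ)
    (hd : ∀ i, 0 ≤ d i) (hc : ∀ i, x i ≠ y i → c ≤ d i) :
    c * hammingDist x y ≤ ∑ i, d i := by
  calc c * hammingDist x y = #{i | x i ≠ y i} • c := by simp [hammingDist, mul_comm]
    _ ≤ ∑ i ∈ {i | x i ≠ y i}, d i := card_nsmul_le_sum _ _ _ fun i hi => hc i (by simpa using hi)
    _ ≤ ∑ i, d i := sum_le_univ_sum_of_nonneg hd

theorem sum_le_mul_hammingDist (x y : ι → β) (d : ι → ℕ) (c : ℕ)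
    (hd : ∀ i, x i = y i → d i = 0) (hc : ∀ i, d i ≤ c) :
    ∑ i, d i ≤ c * hammingDist x y := by
  calc ∑ i, d i = ∑ i ∈ {i | x i ≠ y i}, d i :=
        (sum_subset (subset_univ _) fun i _ hi => hd i (by simpa using hi)).symm
    _ ≤ #{i | x i ≠ y i} • c := sum_le_card_nsmul _ _ _ fun i _ => hc i
    _ = c * hammingDist x y := by simp [hammingDist, mul_comm]

end HammingBlocks

theorem cast_div_le_cast_div_of_le_mul {d h n k N : ℕ} (hd : d ≤ k * h) (hh : h ≤ n)
    (hN : k * n ≤ N) : (d : ℝ) / N ≤ h / n := by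
  rcases Nat.eq_zero_or_pos d with rfl | hd0
  · simp only [Nat.cast_zero, zero_div]; positivity
  have hk : 0 < k := Nat.pos_of_ne_zero fun h0 => by simp [h0] at hd; omega
  have hn : 0 < n := by nlinarith
  rw [div_le_div_iff₀ (by exact_mod_cast (by nlinarith : 0 < N)) (by exact_mod_cast hn)]
  exact_mod_cast (calc d * n ≤ k * h * n := Nat.mul_le_mul_right n hd
    _ = h * (k * n) := by ring
    _ ≤ h * N := Nat.mul_le_mul_left h hN)

theorem hammingDist_FE {n m k : ℕ} (b : ℕ) (SE : Fin n → Bool → Fin k → Bool)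
    (GE : (Fin m → Fin n) → Fin n → Fin n) (z z' : Fin m → Fin n) (x x' : Fin n → Bool) :
    hammingDist (FE b SE GE z x) (FE b SE GE z' x') =
      ∑ j, hammingDist (SE (GE z j) (x j)) (SE (GE z' j) (x' j)) := by
  have hprefix : FE b SE GE z x ∘ Sum.inl = FE b SE GE z' x' ∘ Sum.inl := by
    ext (_ | _) <;> rfl
  rw [hammingDist_sum_type, hprefix, hammingDist_self, zero_add, hammingDist_prod_type]
  rfl

theorem stmt_14_general {n m k b : ℕ}
    (ζ : ℝ)
    (SE : Fin n → Bool → Fin k → Bool)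
    (GE : (Fin m → Fin n) → Fin n → Fin n)
    (hSE : ∀ (i : Fin n) (a : Bool) (i' : Fin n) (a' : Bool), (i, a) ≠ (i', a') →
      ζ * k ≤ (hammingDist (SE i a) (SE i' a') : ℝ)) :
    (∀ (z z' : Fin m → Fin n) (x x' : Fin n → Bool), x ≠ x' →
      ζ * k * (hammingDist x x' : ℝ) ≤
        (hammingDist (FE b SE GE z x) (FE b SE GE z' x') : ℝ)) ∧
    (∀ (z : Fin m → Fin n) (x x' : Fin n → Bool),
      hammingDist (FE b SE GE z x) (FE b SE GE z x') ≤ k * hammingDist x x') ∧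
    (∀ (z : Fin m → Fin n) (x x' : Fin n → Bool),
      (hammingDist (FE b SE GE z x) (FE b SE GE z x') : ℝ) / ((1 + b + k * n : ℕ) : ℝ) ≤
        (hammingDist x x' : ℝ) / n) := by
  have upper : ∀ (z : Fin m → Fin n) (x x' : Fin n → Bool),
      hammingDist (FE b SE GE z x) (FE b SE GE z x') ≤ k * hammingDist x x' := by
    intro z x x'
    rw [hammingDist_FE]
    refine sum_le_mul_hammingDist x x' _ k (fun j hj => by simp [hj]) fun j => ?_
    simpa using hammingDist_le_card_fintype (x := SE (GE z j) (x j)) (y := SE (GE z j) (x' j))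
  refine ⟨fun z z' x x' _ => ?_, upper, fun z x x' => ?_⟩
  · rw [hammingDist_FE, Nat.cast_sum]
    exact mul_hammingDist_le_sum x x' _ _ (fun _ => Nat.cast_nonneg _)
      fun j hj => hSE _ _ _ _ fun h => hj (Prod.ext_iff.1 h).2
  · refine cast_div_le_cast_div_of_le_mul (upper z x x') ?_ (by omega)
    simpa using hammingDist_le_card_fintype (x := x) (y := x')

/-- With `FE` as defined: for any `z, z' ∈ [n]^m` and any
`x ≠ x' ∈ {0,1}^n`, `δ_H(FE(z,x), FE(z',x')) ≥ ζk·δ_H(x,x')`; and for any fixed `z` and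
any `x, x'`, `δ_H(FE(z,x), FE(z,x')) ≤ k·δ_H(x,x')`, hence
`d_H(FE(z,x), FE(z,x')) ≤ d_H(x,x')` for the normalized distances (`N = 1 + b + kn`). -/
theorem stmt_14 {n m k b : ℕ} (hn : 0 < n) (hk : 0 < k)
    (ζ : ℝ) (hζ : 0 < ζ) (hζ' : ζ < 1 / 2)
    (SE : Fin n → Bool → Fin k → Bool)
    (GE : (Fin m → Fin n) → Fin n → Fin n)
    (hSE : ∀ (i : Fin n) (a : Bool) (i' : Fin n) (a' : Bool), (i, a) ≠ (i', a') →
      ζ * k ≤ (hammingDist (SE i a) (SE i' a') : ℝ)) :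
    (∀ (z z' : Fin m → Fin n) (x x' : Fin n → Bool), x ≠ x' →
      ζ * k * (hammingDist x x' : ℝ) ≤
        (hammingDist (FE b SE GE z x) (FE b SE GE z' x') : ℝ)) ∧
    (∀ (z : Fin m → Fin n) (x x' : Fin n → Bool),
      hammingDist (FE b SE GE z x) (FE b SE GE z x') ≤ k * hammingDist x x') ∧
    (∀ (z : Fin m → Fin n) (x x' : Fin n → Bool),
      (hammingDist (FE b SE GE z x) (FE b SE GE z x') : ℝ) / ((1 + b + k * n : ℕ) : ℝ) ≤
        (hammingDist x x' : ℝ) / n) :=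
  stmt_14_general ζ SE GE hSE
end

section
/- Fix x ∈ {0,1}^n and let z be chosen uniformly at random from [n]^m. Suppose GE : [n]^m → [n]^n has the property that for any set J ⊆ [n] with |J| ≤ ζn, GE(z)|_J is uniformly distributed over [n]^{|J|}, and SE : [n] × {0,1} → {0,1}^k has the property that for fixed a ∈ {0,1}, uniformly random i ∈ [n], and any I ⊆ [k] with |I| ≤ ζk, SE(i,a)|_I is uniform over {0,1}^{|I|}. Then for any query set Q ⊆ [N] with |Q| ≤ ζ·N/(2k) and |Q ∩ C_j| ≤ ζk for every j ∈ [n], the restriction FE(z,x)|_{Q ∖ [b+1]} is uniformly distributed over {0,1}^{|Q ∖ [b+1]|}. -/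
/-! The event that `FE(z,x)` agrees with `w` on the block part of `Q` only constrains the seeds
`GE(z)_j` of the touched blocks `J`, and `|J| ≤ |Q| ≤ ζn`. On block `j` it says that `GE(z)_j`
lies in the set `good_j` of seeds `i` for which `SE(i, x_j)` agrees with `w` on the queried
positions `I_j ⊆ C_j`. As `GE(z)|_J` is uniform, the event has probability `∏_{j ∈ J} |good_j| / n`,
and the property of `SE` gives `|good_j| / n = 2^{-|I_j|}`; the `|I_j|` add up to `|Q ∖ [b+1]|`. -/

open Finset

section Counting

variable {α β γ ι : Type*} [Fintype α]

theorem card_filter_mem_mul_of_card_fiber_mul [DecidableEq γ] (π : α → γ) (S : Finset γ)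
    {d N : ℕ} (hπ : ∀ y ∈ S, #{z | π z = y} * d = N) :
    #{z | π z ∈ S} * d = N * #S := by
  rw [card_eq_sum_card_fiberwise (s := {z | π z ∈ S}) (t := S) fun z hz => (mem_filter.1 hz).2,
    sum_mul, sum_congr rfl fun y hy => ?_, sum_const, smul_eq_mul, mul_comm]
  rw [filter_filter, filter_congr fun z _ => and_iff_right_of_imp fun hz => hz ▸ hy, hπ y hy]

theorem card_filter_forall_mem_mul [DecidableEq β] [Nonempty β] (f : α → ι → β)
    (J : Finset ι) {d N : ℕ} (hf : ∀ g : ι → β, #{z | ∀ j ∈ J, f z j = g j} * d = N)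
    (A : ι → Finset β) :
    #{z | ∀ j ∈ J, f z j ∈ A j} * d = N * ∏ j ∈ J, #(A j) := by
  classical
  have key := card_filter_mem_mul_of_card_fiber_mul (fun z (j : J) => f z j)
    (Fintype.piFinset fun j : J => A j) (d := d) (N := N) fun y _ => by
      convert hf fun j => if h : j ∈ J then y ⟨j, h⟩ else Classical.arbitrary β using 4
      simp +contextual [funext_iff]
  rw [Fintype.card_piFinset, prod_coe_sort (f := fun j => #(A j))] at key
  convert key using 4
  simp

theorem prod_mul_pow_sum_eq_pow_card {s : Finset ι} {a e : ι → ℕ} {n c : ℕ}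
    (h : ∀ j ∈ s, a j * c ^ e j = n) : (∏ j ∈ s, a j) * c ^ ∑ j ∈ s, e j = n ^ #s := by
  rw [← prod_pow_eq_pow_sum, ← prod_mul_distrib, prod_congr rfl h, prod_const]

end Counting

theorem card_filter_isRight {α β : Type*} (u : Finset (α ⊕ β)) :
    #(u.filter fun q => q.isRight = true) = #u.toRight := by
  refine (card_bij (fun p _ => Sum.inr p) (fun p hp => ?_) (fun _ _ _ _ h => Sum.inr_injective h)
    fun q hq => ?_).symm
  · exact mem_filter.2 ⟨mem_toRight.1 hp, rfl⟩
  · obtain ⟨hqu, hq⟩ := mem_filter.1 hq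
    obtain ⟨p, rfl⟩ := Sum.isRight_iff.1 hq
    exact ⟨p, mem_toRight.2 hqu, rfl⟩

section Queries

variable {b n k : ℕ}

def blockQueries (Q : Finset (BigIndex b n k)) (j : Fin n) : Finset (Fin k) :=
  {t | Sum.inr (j, t) ∈ Q}

def touchedBlocks (Q : Finset (BigIndex b n k)) : Finset (Fin n) :=
  {j | (blockQueries Q j).Nonempty}

@[simp]
theorem mem_blockQueries {Q : Finset (BigIndex b n k)} {j : Fin n} {t : Fin k} :
    t ∈ blockQueries Q j ↔ Sum.inr (j, t) ∈ Q := by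
  simp [blockQueries]

@[simp]
theorem mem_touchedBlocks {Q : Finset (BigIndex b n k)} {j : Fin n} :
    j ∈ touchedBlocks Q ↔ (blockQueries Q j).Nonempty := by
  simp [touchedBlocks]

theorem card_blockQueries (Q : Finset (BigIndex b n k)) (j : Fin n) :
    #(blockQueries Q j) = #(Q.filter fun q => ∃ t : Fin k, q = Sum.inr (j, t)) := by
  refine card_bij (fun t _ => Sum.inr (j, t)) (fun t ht => ?_) (fun _ _ _ _ h => by simpa using h)
    fun q hq => ?_
  · exact mem_filter.2 ⟨mem_blockQueries.1 ht, t, rfl⟩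
  · obtain ⟨hqQ, t, rfl⟩ := mem_filter.1 hq
    exact ⟨t, mem_blockQueries.2 hqQ, rfl⟩

theorem sum_card_blockQueries (Q : Finset (BigIndex b n k)) :
    ∑ j ∈ touchedBlocks Q, #(blockQueries Q j) = #(Q.filter fun q => q.isRight = true) := by
  have hsum : ∑ j, #(blockQueries Q j) = #Q.toRight := by
    simp only [blockQueries, card_filter, ← Fintype.sum_prod_type']
    rw [← card_filter, ← filter_univ_mem Q.toRight]
    simp only [mem_toRight]
  rw [card_filter_isRight, ← hsum]
  refine sum_subset (subset_univ _) fun j _ hj => ?_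
  rw [mem_touchedBlocks, not_nonempty_iff_eq_empty] at hj
  rw [hj, card_empty]

theorem card_touchedBlocks_le (Q : Finset (BigIndex b n k)) : #(touchedBlocks Q) ≤ #Q :=
  calc #(touchedBlocks Q)
      ≤ ∑ j ∈ touchedBlocks Q, #(blockQueries Q j) :=
        (card_eq_sum_ones _).trans_le (sum_le_sum fun _ hj => (mem_touchedBlocks.1 hj).card_pos)
    _ = #(Q.filter fun q => q.isRight = true) := sum_card_blockQueries Q
    _ ≤ #Q := card_filter_le _ _

theorem FE_eq_on_blocks_iff {m : ℕ} (SE : Fin n → Bool → Fin k → Bool)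
    (GE : (Fin m → Fin n) → Fin n → Fin n) (z : Fin m → Fin n) (x : Fin n → Bool)
    (w : BigIndex b n k → Bool) (Q : Finset (BigIndex b n k)) :
    (∀ q ∈ Q.filter (fun q => q.isRight = true), FE b SE GE z x q = w q) ↔
      ∀ j ∈ touchedBlocks Q,
        GE z j ∈ ({i | ∀ t ∈ blockQueries Q j, SE i (x j) t = w (Sum.inr (j, t))} : Finset _) := by
  simp only [mem_filter, mem_univ, true_and, mem_blockQueries, and_imp]
  constructor
  · rintro h j - t ht
    exact h _ ht rfl
  · rintro h (q | ⟨j, t⟩) hq hright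
    · simp at hright
    · exact h j (mem_touchedBlocks.2 ⟨t, mem_blockQueries.2 hq⟩) t hq

end Queries

theorem mul_length_div_two_mul_le {ζ : ℝ} (hζ : 0 ≤ ζ) {b k n : ℕ} (hk : 0 < k)
    (hN : 1 + b ≤ k * n) : ζ * ((1 + b + k * n : ℕ) : ℝ) / (2 * k) ≤ ζ * n := by
  have hlen : ((1 + b + k * n : ℕ) : ℝ) ≤ 2 * k * n := by
    exact_mod_cast (by linarith : 1 + b + k * n ≤ 2 * k * n)
  rw [div_le_iff₀ (by positivity)]
  nlinarith

theorem stmt_15_general {n m k b : ℕ} (hn : 0 < n) (hk : 0 < k) (hN : 1 + b ≤ k * n)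
    (ζ : ℝ) (hζ : 0 < ζ)
    (SE : Fin n → Bool → Fin k → Bool)
    (GE : (Fin m → Fin n) → Fin n → Fin n)
    (hGE : ∀ J : Finset (Fin n), (J.card : ℝ) ≤ ζ * n → ∀ g : Fin n → Fin n,
      (Finset.univ.filter (fun z : Fin m → Fin n => ∀ j ∈ J, GE z j = g j)).card *
        n ^ J.card = n ^ m)
    (hSE : ∀ (a : Bool) (I : Finset (Fin k)), (I.card : ℝ) ≤ ζ * k →
      ∀ w : Fin k → Bool,
        (Finset.univ.filter (fun i : Fin n => ∀ t ∈ I, SE i a t = w t)).card *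
          2 ^ I.card = n)
    (x : Fin n → Bool) (Q : Finset (BigIndex b n k))
    (hQ : (Q.card : ℝ) ≤ ζ * ((1 + b + k * n : ℕ) : ℝ) / (2 * k))
    (hQC : ∀ j : Fin n,
      ((Q.filter (fun q => ∃ t : Fin k, q = Sum.inr (j, t))).card : ℝ) ≤ ζ * k) :
    ∀ w : BigIndex b n k → Bool,
      (Finset.univ.filter (fun z : Fin m → Fin n =>
          ∀ q ∈ Q.filter (fun q => q.isRight = true), FE b SE GE z x q = w q)).card *
        2 ^ (Q.filter (fun q => q.isRight = true)).card = n ^ m := by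
  intro w
  have : Nonempty (Fin n) := Fin.pos_iff_nonempty.1 hn
  set J := touchedBlocks Q
  set good : Fin n → Finset (Fin n) :=
    fun j => {i | ∀ t ∈ blockQueries Q j, SE i (x j) t = w (Sum.inr (j, t))}
  have hJ : (#J : ℝ) ≤ ζ * n := (Nat.cast_le.2 (card_touchedBlocks_le Q)).trans
    (hQ.trans (mul_length_div_two_mul_le hζ.le hk hN))
  -- `convert` only reconciles the decidability instances of the filters in `hGE`.
  have hcount : #{z | ∀ j ∈ J, GE z j ∈ good j} * n ^ #J = n ^ m * ∏ j ∈ J, #(good j) := by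
    convert card_filter_forall_mem_mul GE J (fun g => by convert hGE J hJ g) good
  have hgood : (∏ j ∈ J, #(good j)) * 2 ^ ∑ j ∈ J, #(blockQueries Q j) = n ^ #J :=
    prod_mul_pow_sum_eq_pow_card fun j _ =>
      hSE (x j) _ (card_blockQueries Q j ▸ hQC j) fun t => w (Sum.inr (j, t))
  rw [filter_congr fun z _ => FE_eq_on_blocks_iff SE GE z x w Q, ← sum_card_blockQueries]
  refine Nat.eq_of_mul_eq_mul_right (pow_pos hn #J) ?_
  rw [mul_right_comm, hcount, mul_assoc, hgood]

/-- Fix `x ∈ {0,1}^n` and choose `z` uniformly from `[n]^m`. Suppose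
projections of `GE(z)` to any `≤ ζn` coordinates are uniform, and projections of
`SE(i,a)` (for uniform `i`) to any `≤ ζk` coordinates are uniform. Then for any query set
`Q ⊆ [N]` with `|Q| ≤ ζ·N/(2k)` and `|Q ∩ C_j| ≤ ζk` for every `j`, the restriction
`FE(z,x)|_{Q ∖ [b+1]}` is uniformly distributed over `{0,1}^{|Q ∖ [b+1]|}`
(here `N = 1 + b + kn ≤ 2kn`, `Q ∖ [b+1]` is the part of `Q` in the blocks `C_j`,
and uniformity is expressed by exact counting over `z ∈ [n]^m`). -/
theorem stmt_15 {n m k b : ℕ} (hn : 0 < n) (hk : 0 < k) (hN : 1 + b ≤ k * n)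
    (ζ : ℝ) (hζ : 0 < ζ) (hζ' : ζ < 1 / 2)
    (SE : Fin n → Bool → Fin k → Bool)
    (GE : (Fin m → Fin n) → Fin n → Fin n)
    (hGE : ∀ J : Finset (Fin n), (J.card : ℝ) ≤ ζ * n → ∀ g : Fin n → Fin n,
      (Finset.univ.filter (fun z : Fin m → Fin n => ∀ j ∈ J, GE z j = g j)).card *
        n ^ J.card = n ^ m)
    (hSE : ∀ (a : Bool) (I : Finset (Fin k)), (I.card : ℝ) ≤ ζ * k →
      ∀ w : Fin k → Bool,
        (Finset.univ.filter (fun i : Fin n => ∀ t ∈ I, SE i a t = w t)).card *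
          2 ^ I.card = n)
    (x : Fin n → Bool) (Q : Finset (BigIndex b n k))
    (hQ : (Q.card : ℝ) ≤ ζ * ((1 + b + k * n : ℕ) : ℝ) / (2 * k))
    (hQC : ∀ j : Fin n,
      ((Q.filter (fun q => ∃ t : Fin k, q = Sum.inr (j, t))).card : ℝ) ≤ ζ * k) :
    ∀ w : BigIndex b n k → Bool,
      (Finset.univ.filter (fun z : Fin m → Fin n =>
          ∀ q ∈ Q.filter (fun q => q.isRight = true), FE b SE GE z x q = w q)).card *
        2 ^ (Q.filter (fun q => q.isRight = true)).card = n ^ m :=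
  stmt_15_general hn hk hN ζ hζ SE GE hGE hSE x Q hQ hQC
end
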